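/- arXiv:0705.4341 — 5 statements merged into one kernel-verified Lean document; each statement's English description precedes it below -/
import Mathlib

section
/- Suppose A is a C*-algebra and X₁₁, X₁₂, X₂₁, X₂₂ are closed linear subspaces of A with X_ij* = X_ji, X_ij·X_jk ⊆ X_ik, and X₁₁·X₂₂ = {0}. Then the sum X₁₁ + X₂₁ + X₁₂ + X₂₂ is a linear direct sum (if x₁₁ + x₂₁ + x₁₂ + x₂₂ = 0 with x_ij ∈ X_ij then each x_ij = 0), it is a closed *-subalgebra of A, and the map sending x₁₁ + x₂₁ + x₁₂ + x₂₂ to the 2×2 matrix with (i,j) entry x_ij is an isometric *-isomorphism from this subalgebra onto the C*-subalgebra X̂ = {matrices over A with (i,j) entry in X_ij} of M₂(A). -/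
/-!
For `a ∈ X i j` and `b ∈ X k l` with `j ≠ k` the product `a * b` vanishes: `(a⋆ a)(b b⋆)` lies in
`X j j * X k k = 0`, and the C⋆-identity turns this into `a * b = 0`. Consequently the entry sum
`Φ` is multiplicative on `X̂`, and conjugating `Φ M` by `(M i j)⋆` kills every entry but `M i j`,
which gives `‖M i j‖ ≤ ‖Φ M‖`. This lower bound makes `Φ` antilipschitz on the complete space
`X̂`, so it is injective, a topological embedding, and has closed range.
-/

section CStarRing

variable {A : Type*} [NonUnitalNormedRing A] [StarRing A] [CStarRing A]

theorem CStarRing.mul_eq_zero_of_star_mul_self_mul_mul_star_self {a b : A}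
    (h : star a * a * (b * star b) = 0) : a * b = 0 := by
  rw [← CStarRing.star_mul_self_eq_zero_iff, ← CStarRing.star_mul_self_eq_zero_iff]
  calc star (star (a * b) * (a * b)) * (star (a * b) * (a * b))
      = star b * (star a * a * (b * star b)) * (star a * a) * b := by
        simp only [star_mul, star_star]; noncomm_ring
    _ = 0 := by rw [h, mul_zero, zero_mul, zero_mul]

theorem CStarRing.norm_le_of_star_mul_mul_star_eq {x a : A}
    (h : star x * a * star x = star x * x * star x) : ‖x‖ ≤ ‖a‖ := by
  rcases (norm_nonneg x).eq_or_lt with hx | hx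
  · rw [← hx]; exact norm_nonneg a
  have key : ‖x‖ ^ 3 * ‖x‖ ≤ ‖x‖ ^ 3 * ‖a‖ := calc
    ‖x‖ ^ 3 * ‖x‖ = ‖star (star x * x) * (star x * x)‖ := by
        rw [CStarRing.norm_star_mul_self, CStarRing.norm_star_mul_self]; ring
    _ = ‖star x * a * star x * x‖ := by rw [h]; simp only [star_mul, star_star, mul_assoc]
    _ ≤ ‖star x‖ * ‖a‖ * ‖star x‖ * ‖x‖ :=
        (norm_mul_le _ _).trans (mul_le_mul_of_nonneg_right norm_mul₃_le (norm_nonneg _))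
    _ = ‖x‖ ^ 3 * ‖a‖ := by rw [norm_star]; ring
  exact le_of_mul_le_mul_left key (pow_pos hx 3)

end CStarRing

def Matrix.entrySum {m n α : Type*} [Fintype m] [Fintype n] [AddCommMonoid α]
    (M : Matrix m n α) : α :=
  ∑ i, ∑ j, M i j

theorem Matrix.entrySum_fin_two {α : Type*} [AddCommMonoid α] (M : Matrix (Fin 2) (Fin 2) α) :
    M.entrySum = M 0 0 + M 1 0 + M 0 1 + M 1 1 := by
  simp only [Matrix.entrySum, Fin.sum_univ_two]
  abel

theorem Matrix.entrySum_star {n α : Type*} [Fintype n] [AddCommMonoid α] [StarAddMonoid α]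
    (M : Matrix n n α) : (star M).entrySum = star M.entrySum := by
  simp only [Matrix.entrySum, Matrix.star_apply, star_sum]
  exact Finset.sum_comm

/-- The axioms satisfied by the corners `pᵢ A pⱼ` of mutually orthogonal projections `pᵢ`. -/
structure IsCornerSystem {ι A : Type*} [NonUnitalCStarAlgebra A]
    (X : ι → ι → Submodule ℂ A) : Prop where
  star_mem {i j : ι} {a : A} : a ∈ X i j → star a ∈ X j i
  mul_mem {i j k : ι} {a b : A} : a ∈ X i j → b ∈ X j k → a * b ∈ X i k
  diag_mul_diag {j k : ι} {a b : A} : j ≠ k → a ∈ X j j → b ∈ X k k → a * b = 0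

namespace IsCornerSystem

section

variable {ι A : Type*} [NonUnitalCStarAlgebra A] {X : ι → ι → Submodule ℂ A}

theorem mul_eq_zero (hX : IsCornerSystem X) {i j k l : ι} {a b : A} (hjk : j ≠ k)
    (ha : a ∈ X i j) (hb : b ∈ X k l) : a * b = 0 :=
  CStarRing.mul_eq_zero_of_star_mul_self_mul_mul_star_self <| hX.diag_mul_diag hjk
    (hX.mul_mem (hX.star_mem ha) ha) (hX.mul_mem hb (hX.star_mem hb))

variable [Fintype ι]

def cornerSubalgebra (hX : IsCornerSystem X) : NonUnitalStarSubalgebra ℂ (Matrix ι ι A) where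
  carrier := {M | ∀ i j, M i j ∈ X i j}
  add_mem' hM hN i j := add_mem (hM i j) (hN i j)
  zero_mem' _ _ := zero_mem _
  mul_mem' hM hN i j := sum_mem fun k _ => hX.mul_mem (hM i k) (hN k j)
  smul_mem' c _ hM i j := Submodule.smul_mem _ c (hM i j)
  star_mem' hM i j := hX.star_mem (hM j i)

theorem mem_cornerSubalgebra (hX : IsCornerSystem X) {M : Matrix ι ι A} :
    M ∈ hX.cornerSubalgebra ↔ ∀ i j, M i j ∈ X i j :=
  Iff.rfl

theorem entrySum_mul (hX : IsCornerSystem X) {M N : Matrix ι ι A}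
    (hM : M ∈ hX.cornerSubalgebra) (hN : N ∈ hX.cornerSubalgebra) :
    (M * N).entrySum = M.entrySum * N.entrySum := by
  have hrow : ∀ i k, M i k * N.entrySum = ∑ j, M i k * N k j := fun i k => by
    rw [Matrix.entrySum, Finset.mul_sum, Finset.sum_eq_single k (fun k' _ hk' => by
      rw [Finset.mul_sum]
      exact Finset.sum_eq_zero fun j _ => hX.mul_eq_zero (Ne.symm hk') (hM i k) (hN k' j))
      (by simp), Finset.mul_sum]
  calc (M * N).entrySum = ∑ i, ∑ k, M i k * N.entrySum := by
        simp only [hrow]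
        simp only [Matrix.entrySum, Matrix.mul_apply]
        exact Finset.sum_congr rfl fun i _ => Finset.sum_comm
    _ = M.entrySum * N.entrySum := by simp only [Matrix.entrySum, Finset.sum_mul]

theorem star_mul_entrySum_mul_star (hX : IsCornerSystem X) {M : Matrix ι ι A}
    (hM : M ∈ hX.cornerSubalgebra) (i j : ι) :
    star (M i j) * M.entrySum * star (M i j) = star (M i j) * M i j * star (M i j) := by
  have hs := hX.star_mem (hM i j)
  simp only [Matrix.entrySum, Finset.mul_sum, Finset.sum_mul]
  rw [Finset.sum_eq_single i, Finset.sum_eq_single j]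
  · intro l _ hl
    rw [mul_assoc, hX.mul_eq_zero hl (hM i l) hs, mul_zero]
  · simp
  · intro k _ hk
    exact Finset.sum_eq_zero fun l _ => by rw [hX.mul_eq_zero (Ne.symm hk) hs (hM k l), zero_mul]
  · simp

theorem norm_le_norm_entrySum (hX : IsCornerSystem X) {M : Matrix ι ι A}
    (hM : M ∈ hX.cornerSubalgebra) (i j : ι) : ‖M i j‖ ≤ ‖M.entrySum‖ :=
  CStarRing.norm_le_of_star_mul_mul_star_eq (hX.star_mul_entrySum_mul_star hM i j)

def entrySumHom (hX : IsCornerSystem X) : hX.cornerSubalgebra →⋆ₙₐ[ℂ] A where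
  toFun M := (M : Matrix ι ι A).entrySum
  map_smul' c M := by simp [Matrix.entrySum, Finset.smul_sum]
  map_zero' := by simp [Matrix.entrySum]
  map_add' M N := by simp [Matrix.entrySum, Finset.sum_add_distrib]
  map_mul' M N := hX.entrySum_mul M.2 N.2
  map_star' M := Matrix.entrySum_star (M : Matrix ι ι A)

theorem isClosed_cornerSubalgebra (hX : IsCornerSystem X)
    (hclosed : ∀ i j, IsClosed (X i j : Set A)) :
    IsClosed (hX.cornerSubalgebra : Set (Matrix ι ι A)) := by
  have : (hX.cornerSubalgebra : Set (Matrix ι ι A)) =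
      ⋂ i, ⋂ j, (· i j) ⁻¹' (X i j : Set A) := by
    ext M; simp [mem_cornerSubalgebra]
  rw [this]
  exact isClosed_iInter fun i => isClosed_iInter fun j =>
    (hclosed i j).preimage (continuous_id.matrix_elem i j)

section

attribute [local instance] Matrix.normedAddCommGroup

theorem antilipschitzWith_entrySumHom (hX : IsCornerSystem X) :
    AntilipschitzWith 1 hX.entrySumHom := by
  refine AntilipschitzWith.of_le_mul_dist fun M N => ?_
  rw [NNReal.coe_one, one_mul, Subtype.dist_eq, dist_eq_norm, dist_eq_norm, ← map_sub]
  exact (Matrix.norm_le_iff (norm_nonneg _)).2 fun i j => hX.norm_le_norm_entrySum (M - N).2 i j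

end

theorem isClosedEmbedding_entrySumHom (hX : IsCornerSystem X)
    (hclosed : ∀ i j, IsClosed (X i j : Set A)) :
    Topology.IsClosedEmbedding hX.entrySumHom := by
  let _ : NormedAddCommGroup (Matrix ι ι A) := Matrix.normedAddCommGroup
  have : CompleteSpace hX.cornerSubalgebra :=
    (hX.isClosed_cornerSubalgebra hclosed).completeSpace_coe
  -- instance search does not identify the two uniform structures on the subalgebra
  refine @AntilipschitzWith.isClosedEmbedding _ _ _ _ _ _ this hX.antilipschitzWith_entrySumHom ?_
  refine uniformContinuous_addMonoidHom_of_continuous ?_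
  exact continuous_finsetSum _ fun i _ => continuous_finsetSum _ fun j _ =>
    continuous_subtype_val.matrix_elem i j

end

section FinTwo

variable {A : Type*} [NonUnitalCStarAlgebra A] {X : Fin 2 → Fin 2 → Submodule ℂ A}

theorem of_fin_two (hstar : ∀ i j, ∀ a ∈ X i j, star a ∈ X j i)
    (hmul : ∀ i j k, ∀ a ∈ X i j, ∀ b ∈ X j k, a * b ∈ X i k)
    (horth : ∀ a ∈ X 0 0, ∀ b ∈ X 1 1, a * b = 0) : IsCornerSystem X where
  star_mem := hstar _ _ _
  mul_mem ha hb := hmul _ _ _ _ ha _ hb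
  diag_mul_diag {j k a b} hjk ha hb := by
    obtain ⟨rfl, rfl⟩ | ⟨rfl, rfl⟩ : j = 0 ∧ k = 1 ∨ j = 1 ∧ k = 0 := by omega
    · exact horth a ha b hb
    · simpa using congrArg star (horth _ (hstar _ _ b hb) _ (hstar _ _ a ha))

theorem matrix_fin_two_mem (hX : IsCornerSystem X) {w x y z : A} (hw : w ∈ X 0 0)
    (hx : x ∈ X 1 0) (hy : y ∈ X 0 1) (hz : z ∈ X 1 1) : !![w, y; x, z] ∈ hX.cornerSubalgebra := by
  intro i j
  fin_cases i <;> fin_cases j <;> assumption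

theorem image_entrySum_fin_two (hX : IsCornerSystem X) :
    Matrix.entrySum '' (hX.cornerSubalgebra : Set (Matrix (Fin 2) (Fin 2) A)) =
      {a | ∃ x₁₁ ∈ X 0 0, ∃ x₂₁ ∈ X 1 0, ∃ x₁₂ ∈ X 0 1, ∃ x₂₂ ∈ X 1 1,
        a = x₁₁ + x₂₁ + x₁₂ + x₂₂} := by
  ext a
  constructor
  · rintro ⟨M, hM, rfl⟩
    exact ⟨_, hM 0 0, _, hM 1 0, _, hM 0 1, _, hM 1 1, M.entrySum_fin_two⟩
  · rintro ⟨w, hw, x, hx, y, hy, z, hz, rfl⟩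
    exact ⟨_, hX.matrix_fin_two_mem hw hx hy hz, Matrix.entrySum_fin_two _⟩

end FinTwo

end IsCornerSystem

/-- Given closed subspaces `X i j` of a C*-algebra `A` with `(X i j)* = X j i`,
`X i j * X j k ⊆ X i k` and `X 0 0 * X 1 1 = 0`, the sum `X₁₁ + X₂₁ + X₁₂ + X₂₂` is a linear
direct sum and a closed *-subalgebra of `A`, and the map sending `x₁₁ + x₂₁ + x₁₂ + x₂₂` to
the matrix with `(i,j)` entry `x_ij` is an isometric *-isomorphism onto the C*-subalgebra
`X̂ ⊆ M₂(A)`.  (The map is formalized through its inverse `Φ`, the sum-of-entries map, which is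
a *-multiplicative homeomorphic bijection from `X̂` onto the sum; being a bijective
*-homomorphism of C*-algebras, it is automatically isometric.) -/
theorem stmt5 {A : Type*} [NonUnitalCStarAlgebra A]
    (X : Fin 2 → Fin 2 → Submodule ℂ A)
    (hclosed : ∀ i j, IsClosed (X i j : Set A))
    (hstar : ∀ i j, ∀ a ∈ X i j, star a ∈ X j i)
    (hmul : ∀ i j k, ∀ a ∈ X i j, ∀ b ∈ X j k, a * b ∈ X i k)
    (horth : ∀ a ∈ X 0 0, ∀ b ∈ X 1 1, a * b = 0)
    (Xhat : Set (Matrix (Fin 2) (Fin 2) A))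
    (hXhat : Xhat = {M : Matrix (Fin 2) (Fin 2) A | ∀ i j, M i j ∈ X i j})
    (Ssum : Set A)
    (hSsum : Ssum = {a : A | ∃ x₁₁ ∈ X 0 0, ∃ x₂₁ ∈ X 1 0, ∃ x₁₂ ∈ X 0 1, ∃ x₂₂ ∈ X 1 1,
      a = x₁₁ + x₂₁ + x₁₂ + x₂₂})
    (Φ : Matrix (Fin 2) (Fin 2) A → A)
    (hΦ : ∀ M, Φ M = M 0 0 + M 1 0 + M 0 1 + M 1 1) :
    -- the sum is a linear direct sum
    (∀ x₁₁ ∈ X 0 0, ∀ x₂₁ ∈ X 1 0, ∀ x₁₂ ∈ X 0 1, ∀ x₂₂ ∈ X 1 1,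
      x₁₁ + x₂₁ + x₁₂ + x₂₂ = 0 → x₁₁ = 0 ∧ x₂₁ = 0 ∧ x₁₂ = 0 ∧ x₂₂ = 0) ∧
    -- it is a closed *-subalgebra of `A`
    (∃ S : NonUnitalStarSubalgebra ℂ A, (S : Set A) = Ssum ∧ IsClosed (S : Set A)) ∧
    -- `Φ` is a bijection from `X̂` onto the sum, is linear (by definition), preserves products
    -- and adjoints of elements of `X̂`, and is a homeomorphism onto its image; its inverse is
    -- the asserted isometric *-isomorphism onto `X̂`
    Set.BijOn Φ Xhat Ssum ∧
    (∀ M ∈ Xhat, ∀ N ∈ Xhat, Φ (M * N) = Φ M * Φ N) ∧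
    (∀ M ∈ Xhat, Φ (star M) = star (Φ M)) ∧
    Topology.IsEmbedding (fun M : Xhat => Φ M) := by
  have hX := IsCornerSystem.of_fin_two hstar hmul horth
  obtain rfl : Xhat = hX.cornerSubalgebra := hXhat
  obtain rfl : Ssum = _ := hSsum.trans hX.image_entrySum_fin_two.symm
  obtain rfl : Φ = Matrix.entrySum := funext fun M => (hΦ M).trans M.entrySum_fin_two.symm
  have hemb := hX.isClosedEmbedding_entrySumHom hclosed
  refine ⟨fun w hw x hx y hy z hz h => ?_, ⟨NonUnitalStarAlgHom.range hX.entrySumHom, ?_, ?_⟩,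
    Set.InjOn.bijOn_image fun M hM N hN h =>
      congrArg Subtype.val (hemb.injective (a₁ := ⟨M, hM⟩) (a₂ := ⟨N, hN⟩) h),
    fun M hM N hN => hX.entrySum_mul hM hN, fun M _ => M.entrySum_star, hemb.isEmbedding⟩
  · have hM := hX.norm_le_norm_entrySum (hX.matrix_fin_two_mem hw hx hy hz)
    simp only [Matrix.entrySum_fin_two, Matrix.of_apply, Matrix.cons_val', Matrix.cons_val_zero,
      Matrix.cons_val_one, h, norm_zero, norm_le_zero_iff] at hM
    exact ⟨hM 0 0, hM 1 0, hM 0 1, hM 1 1⟩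
  · rw [NonUnitalStarAlgHom.coe_range, Set.image_eq_range]
    rfl
  · exact hemb.isClosed_range
end

section
/- Suppose A is a C*-algebra and X₁₁, X₁₂, X₂₁, X₂₂ are closed linear subspaces of A with X_ij* = X_ji, X_ij·X_jk ⊆ X_ik, and X₁₁·X₂₂ = {0}, and let S = X₁₁ + X₂₁ + X₁₂ + X₂₂, a C*-subalgebra of A. Then there is a family θ_t, t ∈ [0,1], of injective *-homomorphisms θ_t : S → M₂(A), such that t ↦ θ_t(s) is norm-continuous for each s ∈ S, θ₀(x₁₁ + x₂₁ + x₁₂ + x₂₂) is the matrix with (1,1) entry x₁₁ + x₂₁ + x₁₂ + x₂₂ and all other entries 0, and θ₁(x₁₁ + x₂₁ + x₁₂ + x₂₂) is the matrix with (i,j) entry x_ij. -/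
/-!
In a C⋆-algebra, `y⋆ y y⋆ = 0` forces `y = 0`. Applied to `y = x x'` with `x ∈ X i j`,
`x' ∈ X k l`, `j ≠ k`, this gives `X i j * X k l = 0`, because `X j j * X k k = 0`; applied to
the summands of a vanishing sum `∑ x_kl`, it shows that the sum of the `X i j` is direct. So
summing the entries is a ⋆-isomorphism onto `S` from the algebra of `2 × 2` matrices with
`(i, j)` entry in `X i j`. On that algebra `m ↦ Cᴴ m C`, for a scalar matrix `C` whose rows are
unit vectors, is a ⋆-homomorphism: the cross terms are products `X i j * X k l` with `j ≠ k`.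
Taking the rows `e₀` and `(cos (π t / 2), sin (π t / 2))` gives `θ_t`: at `t = 1`, `C` is the
identity, and at `t = 0`, `Cᴴ m C` is the sum of the entries of `m` placed in the corner. For
`t > 0` the matrix `C` is invertible, and at `t = 0` injectivity is the directness of the sum.
-/

namespace Matrix

variable {R A ι κ μ : Type*} [Fintype ι] [CommSemiring R] [StarRing R]

/-- `scalarConj C m` is `Cᴴ * m * C`, the scalar entries of `C` acting on the entries of `m`. -/
def scalarConj [AddCommMonoid A] [Module R A] (C : Matrix ι κ R) :
    Matrix ι ι A →ₗ[R] Matrix κ κ A where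
  toFun m := of fun i j => ∑ k, ∑ l, (star (C k i) * C l j) • m k l
  map_add' m m' := by ext; simp [smul_add, Finset.sum_add_distrib]
  map_smul' r m := by ext; simp [Finset.smul_sum, smul_comm r]

section Module

variable [AddCommMonoid A] [Module R A]

@[simp]
lemma scalarConj_apply (C : Matrix ι κ R) (m : Matrix ι ι A) (i j : κ) :
    scalarConj C m i j = ∑ k, ∑ l, (star (C k i) * C l j) • m k l :=
  rfl

lemma scalarConj_one [DecidableEq ι] (m : Matrix ι ι A) : scalarConj (1 : Matrix ι ι R) m = m := by
  ext i j
  simp [one_apply, apply_ite star, ite_smul]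

lemma scalarConj_scalarConj [Fintype κ] (C : Matrix ι κ R) (D : Matrix κ μ R) (m : Matrix ι ι A) :
    scalarConj D (scalarConj C m) = scalarConj (C * D) m := by
  ext i j
  simp only [scalarConj_apply, mul_apply, star_sum, star_mul', Finset.smul_sum, smul_smul,
    Finset.sum_mul, Finset.mul_sum]
  simp only [Finset.sum_smul]
  refine (Finset.sum_congr rfl fun p _ => Finset.sum_comm_cycle.symm).trans
    (Finset.sum_comm_cycle.symm.trans ?_)
  refine Finset.sum_congr rfl fun k _ => Finset.sum_congr rfl fun l _ =>
    Finset.sum_comm.trans (Finset.sum_congr rfl fun q _ => Finset.sum_congr rfl fun p _ => ?_)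
  ring_nf

lemma scalarConj_injective [DecidableEq ι] {C : Matrix ι ι R} (hC : IsUnit C) :
    Function.Injective (scalarConj (A := A) C) := by
  obtain ⟨D, hCD⟩ := hC.exists_right_inv
  refine Function.LeftInverse.injective (g := scalarConj D) fun m => ?_
  rw [scalarConj_scalarConj, hCD, scalarConj_one]

lemma star_scalarConj [StarAddMonoid A] [StarModule R A] (C : Matrix ι κ R) (m : Matrix ι ι A) :
    star (scalarConj C m) = scalarConj C (star m) := by
  ext i j
  simp only [star_apply, scalarConj_apply, star_sum, star_smul, star_mul', star_star]
  refine Finset.sum_comm.trans (Finset.sum_congr rfl fun k _ => Finset.sum_congr rfl fun l _ => ?_)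
  rw [mul_comm]

lemma continuous_scalarConj [TopologicalSpace R] [ContinuousMul R] [ContinuousStar R]
    [TopologicalSpace A] [ContinuousAdd A] [ContinuousSMul R A] {T : Type*} [TopologicalSpace T]
    {C : T → Matrix ι κ R} (hC : Continuous C) (m : Matrix ι ι A) :
    Continuous fun t => scalarConj (C t) m :=
  continuous_pi fun i => continuous_pi fun j => continuous_finsetSum _ fun k _ =>
    continuous_finsetSum _ fun l _ =>
      ((hC.matrix_elem k i).star.mul (hC.matrix_elem l j)).smul continuous_const

end Module

lemma scalarConj_mul [Fintype κ] [NonUnitalNonAssocSemiring A] [Module R A] [IsScalarTower R A A]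
    [SMulCommClass R A A] {C : Matrix ι κ R} (hC : ∀ l, ∑ p, C l p * star (C l p) = 1)
    {m m' : Matrix ι ι A} (h : ∀ k l k' l', l ≠ k' → m k l * m' k' l' = 0) :
    scalarConj C (m * m') = scalarConj C m * scalarConj C m' := by
  ext i j
  simp only [mul_apply, scalarConj_apply]
  symm
  calc _ = ∑ p, ∑ k, ∑ l, ∑ l',
        (star (C k i) * C l p * (star (C l p) * C l' j)) • (m k l * m' l l') := by
        simp only [Finset.sum_mul]
        simp only [Finset.mul_sum, smul_mul_smul_comm]
        refine Finset.sum_congr rfl fun p _ => Finset.sum_congr rfl fun k _ =>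
          Finset.sum_congr rfl fun l _ => Fintype.sum_eq_single l fun k' hk' => ?_
        simp [h k l k' _ (Ne.symm hk')]
    _ = ∑ k, ∑ l, ∑ l',
        (∑ p, star (C k i) * C l' j * (C l p * star (C l p))) • (m k l * m' l l') := by
        simp only [Finset.sum_smul]
        refine Finset.sum_comm.trans
          (Finset.sum_congr rfl fun k _ => Finset.sum_comm_cycle.symm.trans ?_)
        refine Finset.sum_congr rfl fun l _ => Finset.sum_congr rfl fun l' _ =>
          Finset.sum_congr rfl fun p _ => ?_
        ring_nf
    _ = _ := by
        simp only [← Finset.mul_sum, hC, mul_one, Finset.smul_sum]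
        exact Finset.sum_congr rfl fun k _ => Finset.sum_comm

end Matrix

open Real in
noncomputable def rowRotation (t : ℝ) : Matrix (Fin 2) (Fin 2) ℂ :=
  !![1, 0; (cos (π / 2 * t) : ℂ), (sin (π / 2 * t) : ℂ)]

lemma rowRotation_one : rowRotation 1 = 1 := by
  ext i j
  fin_cases i <;> fin_cases j <;> simp [rowRotation]

lemma rowRotation_row_norm (t : ℝ) :
    ∀ l, ∑ p, rowRotation t l p * star (rowRotation t l p) = 1 := by
  refine Fin.forall_fin_two.mpr ⟨by simp [rowRotation], ?_⟩
  simp only [rowRotation, Fin.sum_univ_two, Matrix.of_apply, Matrix.cons_val_one,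
    Matrix.cons_val_zero, Complex.star_def, Complex.conj_ofReal, ← sq]
  exact_mod_cast Real.cos_sq_add_sin_sq _

lemma continuous_rowRotation : Continuous rowRotation := by
  refine continuous_pi fun i => continuous_pi fun j => ?_
  fin_cases i <;> fin_cases j <;> simp only [rowRotation] <;> fun_prop

lemma isUnit_rowRotation {t : ℝ} (h0 : 0 < t) (h2 : t < 2) : IsUnit (rowRotation t) := by
  rw [Matrix.isUnit_iff_isUnit_det, rowRotation, Matrix.det_fin_two_of, isUnit_iff_ne_zero]
  have hsin : 0 < Real.sin (Real.pi / 2 * t) :=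
    Real.sin_pos_of_pos_of_lt_pi (by positivity) (by nlinarith [Real.pi_pos])
  simp only [one_mul, zero_mul, sub_zero]
  exact_mod_cast hsin.ne'

lemma scalarConj_rowRotation_zero {A : Type*} [AddCommMonoid A] [Module ℂ A]
    (m : Matrix (Fin 2) (Fin 2) A) :
    Matrix.scalarConj (rowRotation 0) m = Matrix.single 0 0 (∑ i, ∑ j, m i j) := by
  ext i j
  fin_cases i <;> fin_cases j <;> simp [rowRotation, Matrix.single, Fin.sum_univ_two]

lemma CStarRing.eq_zero_of_star_mul_self_mul_star_eq_zero {E : Type*} [NonUnitalNormedRing E]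
    [StarRing E] [CStarRing E] {y : E} (h : star y * y * star y = 0) : y = 0 := by
  have hsq : star (y * star y) * (y * star y) = 0 := by
    rw [(IsSelfAdjoint.mul_star_self y).star_eq, mul_assoc, ← mul_assoc (star y), h, mul_zero]
  exact (CStarRing.mul_star_self_eq_zero_iff y).mp
    ((CStarRing.star_mul_self_eq_zero_iff _).mp hsq)

section MatrixSystem

variable {ι A : Type*}

structure IsMatrixSystem [NonUnitalNonAssocSemiring A] [Star A] [Module ℂ A]
    (X : ι → ι → Submodule ℂ A) : Prop where
  star_mem : ∀ i j, ∀ a ∈ X i j, star a ∈ X j i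
  mul_mem : ∀ i j k, ∀ a ∈ X i j, ∀ b ∈ X j k, a * b ∈ X i k
  diag_mul_diag : ∀ i j, i ≠ j → ∀ a ∈ X i i, ∀ b ∈ X j j, a * b = 0

namespace IsMatrixSystem

lemma of_fin_two [NonUnitalNonAssocSemiring A] [StarRing A] [Module ℂ A]
    {X : Fin 2 → Fin 2 → Submodule ℂ A}
    (hstar : ∀ i j, ∀ a ∈ X i j, star a ∈ X j i)
    (hmul : ∀ i j k, ∀ a ∈ X i j, ∀ b ∈ X j k, a * b ∈ X i k)
    (horth : ∀ a ∈ X 0 0, ∀ b ∈ X 1 1, a * b = 0) : IsMatrixSystem X where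
  star_mem := hstar
  mul_mem := hmul
  diag_mul_diag i j hij a ha b hb := by
    fin_cases i <;> fin_cases j
    · exact absurd rfl hij
    · exact horth a ha b hb
    · rw [← star_star (a * b), star_mul, horth _ (hstar 0 0 b hb) _ (hstar 1 1 a ha), star_zero]
    · exact absurd rfl hij

section Subalgebra

variable [Fintype ι] [NonUnitalNonAssocSemiring A] [Star A] [Module ℂ A]
  {X : ι → ι → Submodule ℂ A} (hX : IsMatrixSystem X)

def matrices : NonUnitalStarSubalgebra ℂ (Matrix ι ι A) where
  carrier := {m | ∀ i j, m i j ∈ X i j}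
  add_mem' hm hm' i j := add_mem (hm i j) (hm' i j)
  zero_mem' _ _ := zero_mem _
  mul_mem' hm hm' i j := sum_mem fun k _ => hX.mul_mem i k j _ (hm i k) _ (hm' k j)
  smul_mem' c _ hm i j := Submodule.smul_mem _ c (hm i j)
  star_mem' hm i j := hX.star_mem j i _ (hm j i)

lemma mem_matrices {m : Matrix ι ι A} : m ∈ hX.matrices ↔ ∀ i j, m i j ∈ X i j :=
  Iff.rfl

end Subalgebra

section CStarAlgebra

variable [NonUnitalCStarAlgebra A] {X : ι → ι → Submodule ℂ A}

lemma mul_eq_zero (hX : IsMatrixSystem X) {i j k l : ι} (hjk : j ≠ k) {a b : A} (ha : a ∈ X i j)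
    (hb : b ∈ X k l) : a * b = 0 := by
  refine CStarRing.eq_zero_of_star_mul_self_mul_star_eq_zero ?_
  have hab : star a * a * (b * star b) = 0 :=
    hX.diag_mul_diag j k hjk _ (hX.mul_mem j i j _ (hX.star_mem i j a ha) a ha)
      _ (hX.mul_mem k l k b hb _ (hX.star_mem k l b hb))
  calc star (a * b) * (a * b) * star (a * b)
      = star b * (star a * a * (b * star b)) * star a := by simp only [star_mul, mul_assoc]
    _ = 0 := by rw [hab, mul_zero, zero_mul]

lemma eq_zero_of_sum_eq_zero [Fintype ι] (hX : IsMatrixSystem X) {m : Matrix ι ι A}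
    (hm : m ∈ hX.matrices) (hsum : ∑ k, ∑ l, m k l = 0) : m = 0 := by
  ext i j
  refine CStarRing.eq_zero_of_star_mul_self_mul_star_eq_zero ?_
  have hy := hX.star_mem i j _ (hm i j)
  -- only the `(i, j)` term survives in `star (m i j) * (∑ k, ∑ l, m k l) * star (m i j)`
  calc star (m i j) * m i j * star (m i j)
      = star (m i j) * (∑ k, ∑ l, m k l) * star (m i j) := by
        simp only [Finset.mul_sum, Finset.sum_mul]
        rw [Fintype.sum_eq_single i fun k hk => Finset.sum_eq_zero fun l _ => by
          rw [hX.mul_eq_zero (Ne.symm hk) hy (hm k l), zero_mul]]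
        rw [Fintype.sum_eq_single j fun l hl => by
          rw [mul_assoc, hX.mul_eq_zero hl (hm i l) hy, mul_zero]]
    _ = 0 := by rw [hsum, mul_zero, zero_mul]

variable [Fintype ι]

noncomputable def entrySum (hX : IsMatrixSystem X) : hX.matrices →⋆ₙₐ[ℂ] A where
  toFun m := ∑ i, ∑ j, (m : Matrix ι ι A) i j
  map_smul' c m := by simp [Finset.smul_sum]
  map_zero' := by simp
  map_add' m m' := by simp [Finset.sum_add_distrib]
  map_mul' m m' := by
    change ∑ i, ∑ j, ∑ k, m.1 i k * m'.1 k j = (∑ i, ∑ k, m.1 i k) * ∑ k', ∑ j, m'.1 k' j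
    simp only [Finset.sum_mul]
    simp only [Finset.mul_sum]
    refine Finset.sum_congr rfl fun i _ => Finset.sum_comm.trans <|
      Finset.sum_congr rfl fun k _ =>
        (Fintype.sum_eq_single (f := fun k' => ∑ j, m.1 i k * m'.1 k' j) k fun k' hk' => ?_).symm
    exact Finset.sum_eq_zero fun j _ => hX.mul_eq_zero (Ne.symm hk') (m.2 i k) (m'.2 k' j)
  map_star' m := by
    change ∑ i, ∑ j, star (m.1 j i) = star (∑ i, ∑ j, m.1 i j)
    simp only [star_sum]
    exact Finset.sum_comm

lemma entrySum_apply (hX : IsMatrixSystem X) (m : hX.matrices) :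
    hX.entrySum m = ∑ i, ∑ j, (m : Matrix ι ι A) i j :=
  rfl

lemma entrySum_injective (hX : IsMatrixSystem X) : Function.Injective hX.entrySum :=
  (injective_iff_map_eq_zero _).mpr fun m hm =>
    Subtype.ext (hX.eq_zero_of_sum_eq_zero m.2 hm)

noncomputable def scalarConjHom {κ : Type*} [Fintype κ] (hX : IsMatrixSystem X)
    (C : Matrix ι κ ℂ) (hC : ∀ l, ∑ p, C l p * star (C l p) = 1) :
    hX.matrices →⋆ₙₐ[ℂ] Matrix κ κ A where
  toFun m := Matrix.scalarConj C (m : Matrix ι ι A)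
  map_smul' c _ := map_smul _ c _
  map_zero' := map_zero _
  map_add' _ _ := map_add _ _ _
  map_mul' m m' := Matrix.scalarConj_mul hC fun _ _ _ _ hlk =>
    hX.mul_eq_zero hlk (m.2 _ _) (m'.2 _ _)
  map_star' _ := (Matrix.star_scalarConj C _).symm

lemma scalarConjHom_apply {κ : Type*} [Fintype κ] (hX : IsMatrixSystem X) (C : Matrix ι κ ℂ)
    (hC : ∀ l, ∑ p, C l p * star (C l p) = 1) (m : hX.matrices) :
    hX.scalarConjHom C hC m = Matrix.scalarConj C (m : Matrix ι ι A) :=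
  rfl

noncomputable def equivOfRange (hX : IsMatrixSystem X) (S : NonUnitalStarSubalgebra ℂ A)
    (hS : (S : Set A) = Set.range hX.entrySum) : hX.matrices ≃⋆ₐ[ℂ] S :=
  StarAlgEquiv.ofBijective (NonUnitalStarAlgHom.codRestrict hX.entrySum S fun m => by
      rw [← SetLike.mem_coe, hS]; exact ⟨m, rfl⟩)
    ⟨fun _ _ h => hX.entrySum_injective (congrArg Subtype.val h), fun s => by
      obtain ⟨m, hm⟩ : (s : A) ∈ Set.range hX.entrySum := by rw [← hS]; exact s.2
      exact ⟨m, Subtype.ext hm⟩⟩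

lemma coe_equivOfRange_apply (hX : IsMatrixSystem X) (S : NonUnitalStarSubalgebra ℂ A)
    (hS : (S : Set A) = Set.range hX.entrySum) (m : hX.matrices) :
    (hX.equivOfRange S hS m : A) = hX.entrySum m :=
  rfl

end CStarAlgebra

section FinTwo

variable [NonUnitalCStarAlgebra A] {X : Fin 2 → Fin 2 → Submodule ℂ A}

lemma entrySum_fin_two (hX : IsMatrixSystem X) (m : hX.matrices) :
    hX.entrySum m = m.1 0 0 + m.1 1 0 + m.1 0 1 + m.1 1 1 := by
  rw [entrySum_apply, Fin.sum_univ_two, Fin.sum_univ_two, Fin.sum_univ_two]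
  abel

lemma mem_matrices_fin_two (hX : IsMatrixSystem X) {x₁₁ x₁₂ x₂₁ x₂₂ : A} (h₁₁ : x₁₁ ∈ X 0 0)
    (h₁₂ : x₁₂ ∈ X 0 1) (h₂₁ : x₂₁ ∈ X 1 0) (h₂₂ : x₂₂ ∈ X 1 1) :
    !![x₁₁, x₁₂; x₂₁, x₂₂] ∈ hX.matrices := by
  rw [mem_matrices]
  intro i j
  fin_cases i <;> fin_cases j <;> simpa

lemma range_entrySum_fin_two (hX : IsMatrixSystem X) :
    Set.range hX.entrySum = {a : A | ∃ x₁₁ ∈ X 0 0, ∃ x₂₁ ∈ X 1 0, ∃ x₁₂ ∈ X 0 1,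
      ∃ x₂₂ ∈ X 1 1, a = x₁₁ + x₂₁ + x₁₂ + x₂₂} := by
  ext a
  constructor
  · rintro ⟨m, rfl⟩
    exact ⟨_, m.2 0 0, _, m.2 1 0, _, m.2 0 1, _, m.2 1 1, hX.entrySum_fin_two m⟩
  · rintro ⟨x₁₁, h₁₁, x₂₁, h₂₁, x₁₂, h₁₂, x₂₂, h₂₂, rfl⟩
    exact ⟨⟨_, hX.mem_matrices_fin_two h₁₁ h₁₂ h₂₁ h₂₂⟩, by simp [entrySum_fin_two]⟩

lemma scalarConjHom_rowRotation_injective (hX : IsMatrixSystem X) {t : ℝ} (h0 : 0 ≤ t)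
    (h2 : t < 2) :
    Function.Injective (hX.scalarConjHom (rowRotation t) (rowRotation_row_norm t)) := by
  rcases h0.eq_or_lt with rfl | h0
  · intro m m' h
    have h00 := congrFun (congrFun h 0) 0
    simp only [scalarConjHom_apply, scalarConj_rowRotation_zero, Matrix.single_apply_same] at h00
    exact hX.entrySum_injective h00
  · exact (Matrix.scalarConj_injective (isUnit_rowRotation h0 h2)).comp Subtype.val_injective

end FinTwo

end IsMatrixSystem

end MatrixSystem

theorem stmt6_general {A : Type*} [NonUnitalCStarAlgebra A]
    (X : Fin 2 → Fin 2 → Submodule ℂ A)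
    (hstar : ∀ i j, ∀ a ∈ X i j, star a ∈ X j i)
    (hmul : ∀ i j k, ∀ a ∈ X i j, ∀ b ∈ X j k, a * b ∈ X i k)
    (horth : ∀ a ∈ X 0 0, ∀ b ∈ X 1 1, a * b = 0)
    (S : NonUnitalStarSubalgebra ℂ A)
    (hS : (S : Set A) = {a : A | ∃ x₁₁ ∈ X 0 0, ∃ x₂₁ ∈ X 1 0, ∃ x₁₂ ∈ X 0 1, ∃ x₂₂ ∈ X 1 1,
      a = x₁₁ + x₂₁ + x₁₂ + x₂₂}) :
    ∃ θ : unitInterval → (S →⋆ₙₐ[ℂ] Matrix (Fin 2) (Fin 2) A),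
      (∀ s : S, Continuous fun t => θ t s) ∧
      (∀ t, Function.Injective (θ t)) ∧
      (∀ s : S, θ 0 s = Matrix.single 0 0 (s : A)) ∧
      (∀ x₁₁ ∈ X 0 0, ∀ x₂₁ ∈ X 1 0, ∀ x₁₂ ∈ X 0 1, ∀ x₂₂ ∈ X 1 1,
        ∀ hmem : x₁₁ + x₂₁ + x₁₂ + x₂₂ ∈ S,
          θ 1 ⟨x₁₁ + x₂₁ + x₁₂ + x₂₂, hmem⟩ = !![x₁₁, x₁₂; x₂₁, x₂₂]) := by
  have hX := IsMatrixSystem.of_fin_two hstar hmul horth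
  have hrange := hS.trans hX.range_entrySum_fin_two.symm
  let e := hX.equivOfRange S hrange
  refine ⟨fun t => (hX.scalarConjHom (rowRotation t) (rowRotation_row_norm t)).comp
    (e.symm : S →⋆ₙₐ[ℂ] hX.matrices), fun s => ?_, fun t => ?_, fun s => ?_, ?_⟩
  · exact Matrix.continuous_scalarConj (continuous_rowRotation.comp continuous_subtype_val) _
  · exact (hX.scalarConjHom_rowRotation_injective t.2.1 (by linarith [t.2.2])).comp e.symm.injective
  · change Matrix.scalarConj (rowRotation 0) (e.symm s : Matrix (Fin 2) (Fin 2) A) = _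
    rw [scalarConj_rowRotation_zero, ← hX.entrySum_apply,
      ← hX.coe_equivOfRange_apply S hrange, StarAlgEquiv.apply_symm_apply]
  · intro x₁₁ h₁₁ x₂₁ h₂₁ x₁₂ h₁₂ x₂₂ h₂₂ hmem
    change Matrix.scalarConj (rowRotation 1) (e.symm _ : Matrix (Fin 2) (Fin 2) A) = _
    rw [rowRotation_one, Matrix.scalarConj_one]
    have hm := hX.mem_matrices_fin_two h₁₁ h₁₂ h₂₁ h₂₂
    have he : e.symm ⟨_, hmem⟩ = ⟨_, hm⟩ := by
      rw [StarAlgEquiv.symm_apply_eq, Subtype.ext_iff, hX.coe_equivOfRange_apply,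
        hX.entrySum_fin_two]
      simp
    rw [he]

/-- With `X i j` as before and `S` the C*-subalgebra
`X₁₁ + X₂₁ + X₁₂ + X₂₂` of `A`, there is a point-norm continuous family `θ_t`, `t ∈ [0,1]`, of
injective *-homomorphisms `S → M₂(A)` with `θ₀(x₁₁ + x₂₁ + x₁₂ + x₂₂)` the matrix having the
sum in the `(1,1)` corner and zeros elsewhere, and `θ₁(x₁₁ + x₂₁ + x₁₂ + x₂₂)` the matrix with
`(i,j)` entry `x_ij`. -/
theorem stmt6 {A : Type*} [NonUnitalCStarAlgebra A]
    (X : Fin 2 → Fin 2 → Submodule ℂ A)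
    (hclosed : ∀ i j, IsClosed (X i j : Set A))
    (hstar : ∀ i j, ∀ a ∈ X i j, star a ∈ X j i)
    (hmul : ∀ i j k, ∀ a ∈ X i j, ∀ b ∈ X j k, a * b ∈ X i k)
    (horth : ∀ a ∈ X 0 0, ∀ b ∈ X 1 1, a * b = 0)
    (S : NonUnitalStarSubalgebra ℂ A)
    (hS : (S : Set A) = {a : A | ∃ x₁₁ ∈ X 0 0, ∃ x₂₁ ∈ X 1 0, ∃ x₁₂ ∈ X 0 1, ∃ x₂₂ ∈ X 1 1,
      a = x₁₁ + x₂₁ + x₁₂ + x₂₂})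
    (hSclosed : IsClosed (S : Set A)) :
    ∃ θ : unitInterval → (S →⋆ₙₐ[ℂ] Matrix (Fin 2) (Fin 2) A),
      (∀ s : S, Continuous fun t => θ t s) ∧
      (∀ t, Function.Injective (θ t)) ∧
      (∀ s : S, θ 0 s = Matrix.single 0 0 (s : A)) ∧
      (∀ x₁₁ ∈ X 0 0, ∀ x₂₁ ∈ X 1 0, ∀ x₁₂ ∈ X 0 1, ∀ x₂₂ ∈ X 1 1,
        ∀ hmem : x₁₁ + x₂₁ + x₁₂ + x₂₂ ∈ S,
          θ 1 ⟨x₁₁ + x₂₁ + x₁₂ + x₂₂, hmem⟩ = !![x₁₁, x₁₂; x₂₁, x₂₂]) :=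
  stmt6_general X hstar hmul horth S hS
end

section
/- Let π : A → B be a surjective *-homomorphism of C*-algebras, and let b₁, b₂ ∈ B satisfy 0 ≤ b₁ ≤ 1, 0 ≤ b₂ ≤ 1, and b₁ b₂ = 0. Then there exist a₁, a₂ ∈ A with 0 ≤ a₁ ≤ 1, 0 ≤ a₂ ≤ 1, a₁ a₂ = 0, π(a₁) = b₁, and π(a₂) = b₂. -/
/-!
Lift `b₁ - b₂` to a selfadjoint `a` and take `a₁, a₂` to be its positive and negative parts,
each truncated at `1`. Truncating keeps them orthogonal positive contractions, and since
`*`-homomorphisms commute with the functional calculus, `π` maps them to the truncated positive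
and negative parts of `b₁ - b₂`. These are `b₁` and `b₂`: the positive and negative parts of a
selfadjoint element are its unique decomposition into orthogonal positive elements, and
truncating at `1` does nothing to a contraction.
-/

open scoped ComplexStarModule

lemma exists_isSelfAdjoint_map_eq_of_surjective {A B F : Type*}
    [AddCommGroup A] [Module ℂ A] [StarAddMonoid A] [StarModule ℂ A]
    [AddCommGroup B] [Module ℂ B] [StarAddMonoid B] [StarModule ℂ B]
    [FunLike F A B] [StarHomClass F A B] [LinearMapClass F ℂ A B]
    (f : F) (hf : Function.Surjective f) {b : B} (hb : IsSelfAdjoint b) :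
    ∃ a : A, IsSelfAdjoint a ∧ f a = b := by
  obtain ⟨x, rfl⟩ := hf b
  exact ⟨ℜ x, (ℜ x).2, by rw [map_realPart, hb.coe_realPart]⟩

lemma cfcₙ_mul_eq_zero_of_mul_eq_zero {R A : Type*} {p : A → Prop} [CommSemiring R]
    [Nontrivial R] [StarRing R] [MetricSpace R] [IsTopologicalSemiring R] [ContinuousStar R]
    [NonUnitalRing A] [StarRing A] [TopologicalSpace A] [Module R A] [IsScalarTower R A A]
    [SMulCommClass R A A]
    [NonUnitalContinuousFunctionalCalculus R A p] {f g : R → R} {a : A}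
    (hfg : ∀ t ∈ quasispectrum R a, f t * g t = 0)
    (hf : ContinuousOn f (quasispectrum R a) := by cfc_cont_tac)
    (hf0 : f 0 = 0 := by cfc_zero_tac)
    (hg : ContinuousOn g (quasispectrum R a) := by cfc_cont_tac)
    (hg0 : g 0 = 0 := by cfc_zero_tac) :
    cfcₙ f a * cfcₙ g a = 0 := by
  rw [← cfcₙ_mul f g a, ← cfcₙ_zero R a]
  exact cfcₙ_congr hfg

section CStarAlgebra

variable {A : Type*} [NonUnitalCStarAlgebra A]

lemma IsSelfAdjoint.cfcₙ_min_one {a : A} (ha : IsSelfAdjoint a) (h : ‖a‖ ≤ 1) :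
    cfcₙ (fun t : ℝ ↦ min t 1) a = a := by
  conv_rhs => rw [← cfcₙ_id' ℝ a]
  refine cfcₙ_congr fun t ht ↦ min_eq_left ?_
  calc t ≤ ‖t‖ := Real.le_norm_self t
    _ ≤ ‖a‖ := NonUnitalIsometricContinuousFunctionalCalculus.norm_quasispectrum_le a ht
    _ ≤ 1 := h

variable [PartialOrder A] [StarOrderedRing A]

lemma cfcₙ_nonneg_and_norm_le_one {f : ℝ → ℝ} {a : A}
    (hf : ∀ t ∈ quasispectrum ℝ a, f t ∈ Set.Icc 0 1) :
    0 ≤ cfcₙ f a ∧ ‖cfcₙ f a‖ ≤ 1 :=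
  ⟨cfcₙ_nonneg fun t ht ↦ (hf t ht).1, norm_cfcₙ_le fun t ht ↦ by
    rw [Real.norm_of_nonneg (hf t ht).1]; exact (hf t ht).2⟩

variable {b₁ b₂ : A} (hb₁ : 0 ≤ b₁) (hb₂ : 0 ≤ b₂) (horth : b₁ * b₂ = 0)
include hb₁ hb₂ horth

lemma cfcₙ_min_posPart_one_sub (hb₁' : ‖b₁‖ ≤ 1) :
    cfcₙ (fun t : ℝ ↦ min t⁺ 1) (b₁ - b₂) = b₁ := by
  have hb : IsSelfAdjoint (b₁ - b₂) := (IsSelfAdjoint.of_nonneg hb₁).sub (.of_nonneg hb₂)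
  rw [show (fun t : ℝ ↦ min t⁺ 1) = (min · 1) ∘ (·⁺) from rfl, cfcₙ_comp _ _ _,
    ← CFC.posPart_def, (CFC.posPart_negPart_unique rfl horth).1,
    (IsSelfAdjoint.of_nonneg hb₁).cfcₙ_min_one hb₁']

lemma cfcₙ_min_negPart_one_sub (hb₂' : ‖b₂‖ ≤ 1) :
    cfcₙ (fun t : ℝ ↦ min t⁻ 1) (b₁ - b₂) = b₂ := by
  have hb : IsSelfAdjoint (b₁ - b₂) := (IsSelfAdjoint.of_nonneg hb₁).sub (.of_nonneg hb₂)
  rw [show (fun t : ℝ ↦ min t⁻ 1) = (min · 1) ∘ (·⁻) from rfl, cfcₙ_comp _ _ _,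
    ← CFC.negPart_def, (CFC.posPart_negPart_unique rfl horth).2,
    (IsSelfAdjoint.of_nonneg hb₂).cfcₙ_min_one hb₂']

end CStarAlgebra

/-- Orthogonal positive contractions lift to orthogonal positive contractions
along a surjective *-homomorphism of C*-algebras. -/
theorem stmt9 {A B : Type*} [NonUnitalCStarAlgebra A] [PartialOrder A] [StarOrderedRing A]
    [NonUnitalCStarAlgebra B] [PartialOrder B] [StarOrderedRing B]
    (π : A →⋆ₙₐ[ℂ] B) (hπ : Function.Surjective π)
    (b₁ b₂ : B) (hb₁ : 0 ≤ b₁) (hb₁' : ‖b₁‖ ≤ 1) (hb₂ : 0 ≤ b₂) (hb₂' : ‖b₂‖ ≤ 1)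
    (horth : b₁ * b₂ = 0) :
    ∃ a₁ a₂ : A, 0 ≤ a₁ ∧ ‖a₁‖ ≤ 1 ∧ 0 ≤ a₂ ∧ ‖a₂‖ ≤ 1 ∧ a₁ * a₂ = 0 ∧
      π a₁ = b₁ ∧ π a₂ = b₂ := by
  obtain ⟨a, ha, hπa⟩ := exists_isSelfAdjoint_map_eq_of_surjective π hπ
    ((IsSelfAdjoint.of_nonneg hb₁).sub (.of_nonneg hb₂))
  have hclip : ∀ t : ℝ, min t⁺ 1 ∈ Set.Icc 0 1 ∧ min t⁻ 1 ∈ Set.Icc 0 1 := fun t ↦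
    ⟨⟨le_min (posPart_nonneg t) zero_le_one, min_le_right _ _⟩,
      ⟨le_min (negPart_nonneg t) zero_le_one, min_le_right _ _⟩⟩
  have horth_clip : ∀ t : ℝ, min t⁺ 1 * min t⁻ 1 = 0 := fun t ↦ by
    rcases le_total t 0 with ht | ht
    · simp [posPart_eq_zero.mpr ht]
    · simp [negPart_eq_zero.mpr ht]
  obtain ⟨ha₁, ha₁'⟩ := cfcₙ_nonneg_and_norm_le_one (a := a) fun t _ ↦ (hclip t).1
  obtain ⟨ha₂, ha₂'⟩ := cfcₙ_nonneg_and_norm_le_one (a := a) fun t _ ↦ (hclip t).2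
  refine ⟨_, _, ha₁, ha₁', ha₂, ha₂', cfcₙ_mul_eq_zero_of_mul_eq_zero fun t _ ↦ horth_clip t,
    ?_, ?_⟩
  · rw [π.map_cfcₙ _ a, hπa, cfcₙ_min_posPart_one_sub hb₁ hb₂ horth hb₁']
  · rw [π.map_cfcₙ _ a, hπa, cfcₙ_min_negPart_one_sub hb₁ hb₂ horth hb₂']
end

section
/- Let A be a C*-algebra and h, x, k ∈ A. If 0 ≤ T(h,x,k) ≤ 1 in M₂(Ã), then 0 ≤ h ≤ 1, 0 ≤ k ≤ 1, x*x ≤ h − h², and xx* ≤ k − k² in A. -/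
/-!
Since `T` is self-adjoint with spectrum in `[0,1]`, the continuous functional calculus of the
C⋆-algebra `M₂(Ã)` gives a self-adjoint `S = √(T - T²)` with `T - T² = S²`. Each diagonal entry of
`S² = S S*` is a sum of elements `s s*`, hence positive, and the diagonal entries of `T - T²` are
`h - h² - x*x` and `k - k² - xx*`. Finally, `0 ≤ h - h²` for self-adjoint `h` confines its
quasispectrum to `[0,1]`.
-/

noncomputable def Tmat {A : Type*} [NonUnitalCStarAlgebra A] (h x k : A) :
    Matrix (Fin 2) (Fin 2) (Unitization ℂ A) :=
  !![1 - (h : Unitization ℂ A), star (x : Unitization ℂ A);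
     (x : Unitization ℂ A), (k : Unitization ℂ A)]

/-- `0 ≤ T ≤ 1` in the C⋆-algebra `M₂(Ã)`, i.e. `T` is self-adjoint with spectrum in `[0,1]`. -/
def IsPosUnitInterval {A : Type*} [NonUnitalCStarAlgebra A]
    (T : Matrix (Fin 2) (Fin 2) (Unitization ℂ A)) : Prop :=
  IsSelfAdjoint T ∧ spectrum ℂ T ⊆ Complex.ofReal '' Set.Icc (0 : ℝ) 1

open Set
open scoped Matrix

lemma CStarAlgebra.exists_isSelfAdjoint_sub_mul_self_eq {B : Type*} [CStarAlgebra B] {a : B}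
    [IsStarNormal a] (ha : spectrum ℂ a ⊆ Complex.ofReal '' Icc 0 1) :
    ∃ s : B, IsSelfAdjoint s ∧ a - a * a = s * s := by
  set f : ℂ → ℂ := fun z => (√(z.re - z.re * z.re) : ℝ)
  refine ⟨cfc f a, ?_, ?_⟩
  · rw [IsSelfAdjoint, ← cfc_star]
    exact cfc_congr fun z _ => Complex.conj_ofReal _
  · have hpoly : a - a * a = cfc (fun z : ℂ => z - z * z) a := by
      rw [cfc_sub (fun z : ℂ => z) (fun z => z * z), cfc_mul (fun z : ℂ => z) (fun z => z) a,
        cfc_id' ℂ a]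
    rw [hpoly, ← cfc_mul f f a]
    refine cfc_congr fun z hz => ?_
    obtain ⟨t, ⟨ht₀, ht₁⟩, rfl⟩ := ha hz
    simp only [f, Complex.ofReal_re, ← Complex.ofReal_mul, ← Complex.ofReal_sub]
    rw [Real.mul_self_sqrt (by nlinarith)]

lemma IsSelfAdjoint.nonneg_and_quasispectrum_subset_Icc_of_sub_mul_self_nonneg {A : Type*}
    [NonUnitalCStarAlgebra A] [PartialOrder A] [StarOrderedRing A] {a : A} (ha : IsSelfAdjoint a)
    (h : 0 ≤ a - a * a) : 0 ≤ a ∧ quasispectrum ℝ a ⊆ Icc 0 1 := by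
  have hcfc : cfcₙ (fun t : ℝ => t - t * t) a = a - a * a := by
    rw [cfcₙ_sub (fun t : ℝ => t) (fun t => t * t) a, cfcₙ_mul (fun t : ℝ => t) (fun t => t) a,
      cfcₙ_id' ℝ a]
  rw [← hcfc, cfcₙ_nonneg_iff _ a] at h
  have hspec : quasispectrum ℝ a ⊆ Icc 0 1 := fun t ht => by
    have := h t ht
    constructor <;> nlinarith
  exact ⟨(StarOrderedRing.nonneg_iff_quasispectrum_nonneg a).mpr fun t ht => (hspec ht).1, hspec⟩

lemma Matrix.mul_conjTranspose_apply_self_nonneg {n R : Type*} [Fintype n] [NonUnitalSemiring R]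
    [PartialOrder R] [StarRing R] [StarOrderedRing R] (S : Matrix n n R) (i : n) :
    0 ≤ (S * Sᴴ) i i :=
  Finset.sum_nonneg fun j _ => mul_star_self_nonneg (S i j)

lemma Matrix.sub_mul_self_apply_self_nonneg {B : Type*} [CStarAlgebra B] [PartialOrder B]
    [StarOrderedRing B] {n : Type*} [Fintype n] [DecidableEq n] {T : Matrix n n B}
    (hT : IsSelfAdjoint T) (hspec : spectrum ℂ T ⊆ Complex.ofReal '' Icc 0 1) (i : n) :
    0 ≤ (T - T * T) i i := by
  -- `CStarMatrix` is the type synonym of `Matrix` carrying the C⋆-norm; `spectrum` only sees the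
  -- algebra structure, which is the same.
  have : IsStarNormal (CStarMatrix.ofMatrix T) := hT.isStarNormal
  obtain ⟨S, hS, hTS⟩ :=
    CStarAlgebra.exists_isSelfAdjoint_sub_mul_self_eq (a := CStarMatrix.ofMatrix T) hspec
  have hTS' : T - T * T = CStarMatrix.ofMatrix.symm S * (CStarMatrix.ofMatrix.symm S)ᴴ := by
    rw [show (CStarMatrix.ofMatrix.symm S)ᴴ = CStarMatrix.ofMatrix.symm S from hS]
    exact hTS
  rw [hTS']
  exact Matrix.mul_conjTranspose_apply_self_nonneg _ i

section Tmat

variable {A : Type*} [NonUnitalCStarAlgebra A]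

lemma Tmat_sub_mul_self_apply_zero_zero (h x k : A) :
    (Tmat h x k - Tmat h x k * Tmat h x k) 0 0 =
      ((h - h * h - star x * x : A) : Unitization ℂ A) := by
  simp only [Tmat, Matrix.sub_apply, Matrix.mul_apply, Fin.sum_univ_two, Matrix.of_apply,
    Matrix.cons_val', Matrix.cons_val_zero, Matrix.cons_val_one, Matrix.empty_val',
    Matrix.cons_val_fin_one, Unitization.inr_sub, Unitization.inr_mul, Unitization.inr_star]
  noncomm_ring

lemma Tmat_sub_mul_self_apply_one_one (h x k : A) :
    (Tmat h x k - Tmat h x k * Tmat h x k) 1 1 =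
      ((k - k * k - x * star x : A) : Unitization ℂ A) := by
  simp only [Tmat, Matrix.sub_apply, Matrix.mul_apply, Fin.sum_univ_two, Matrix.of_apply,
    Matrix.cons_val', Matrix.cons_val_zero, Matrix.cons_val_one, Matrix.empty_val',
    Matrix.cons_val_fin_one, Unitization.inr_sub, Unitization.inr_mul, Unitization.inr_star]
  noncomm_ring

lemma isSelfAdjoint_of_isSelfAdjoint_Tmat {h x k : A} (hT : IsSelfAdjoint (Tmat h x k)) :
    IsSelfAdjoint h ∧ IsSelfAdjoint k := by
  have h₀ : star (h : Unitization ℂ A) = h := by simpa [Tmat] using Matrix.IsHermitian.apply hT 0 0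
  have h₁ : star (k : Unitization ℂ A) = k := by simpa [Tmat] using Matrix.IsHermitian.apply hT 1 1
  exact ⟨Unitization.isSelfAdjoint_inr.mp h₀, Unitization.isSelfAdjoint_inr.mp h₁⟩

end Tmat

/-- If `0 ≤ T(h,x,k) ≤ 1` in `M₂(Ã)`, then `0 ≤ h ≤ 1` and `0 ≤ k ≤ 1`
(positive with (quasi)spectrum in `[0,1]`), `x*x ≤ h - h²`, and `xx* ≤ k - k²` in `A`. -/
theorem stmt13 {A : Type*} [NonUnitalCStarAlgebra A] [PartialOrder A] [StarOrderedRing A]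
    (h x k : A) (hT : IsPosUnitInterval (Tmat h x k)) :
    (0 ≤ h ∧ quasispectrum ℝ h ⊆ Set.Icc (0 : ℝ) 1) ∧
    (0 ≤ k ∧ quasispectrum ℝ k ⊆ Set.Icc (0 : ℝ) 1) ∧
    star x * x ≤ h - h * h ∧ x * star x ≤ k - k * k := by
  obtain ⟨hsa, hspec⟩ := hT
  obtain ⟨hh, hk⟩ := isSelfAdjoint_of_isSelfAdjoint_Tmat hsa
  have hx₁ : star x * x ≤ h - h * h := by
    rw [← sub_nonneg, ← Unitization.inr_nonneg_iff, ← Tmat_sub_mul_self_apply_zero_zero h x k]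
    exact Matrix.sub_mul_self_apply_self_nonneg hsa hspec 0
  have hx₂ : x * star x ≤ k - k * k := by
    rw [← sub_nonneg, ← Unitization.inr_nonneg_iff, ← Tmat_sub_mul_self_apply_one_one h x k]
    exact Matrix.sub_mul_self_apply_self_nonneg hsa hspec 1
  exact ⟨hh.nonneg_and_quasispectrum_subset_Icc_of_sub_mul_self_nonneg
      ((star_mul_self_nonneg x).trans hx₁),
    hk.nonneg_and_quasispectrum_subset_Icc_of_sub_mul_self_nonneg
      ((mul_star_self_nonneg x).trans hx₂),
    hx₁, hx₂⟩
end

section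
/- Let A be a C*-algebra, and let x, h, k ∈ A with h and k positive contractions such that x*x ≤ h − h² and xx* ≤ k − k². Then there exists y ∈ A with x = k^{1/8} y h^{1/8}. -/
/-!
With `e_ν(t) = νt / (νt + 1)` (`unitFun`) and `p_ν(t) = t^{7/8} ν / (νt + 1)` (`cofactorFun`) we
have `t^{1/8} p_ν(t) = e_ν(t)`, so `y_ν = p_ν(k) x p_ν(h)` satisfies
`k^{1/8} y_ν h^{1/8} = e_ν(k) x e_ν(h)`.

From `x x* ≤ k` one gets `‖f(k) x‖ ≤ sup √t f(t)` and `‖x - f(k) x‖ ≤ sup √t (1 - f(t))` over the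
spectrum of `k`, and symmetrically on the right from `x* x ≤ h`. The second estimate gives
`‖x - e_ν(k) x e_ν(h)‖ ≤ 2 ν^{-1/2}`. The first one, with `p_ν ≤ ν^{1/8}` and
`√t (p_{2ν} - p_ν)(t) ≤ ν^{-3/8}`, gives `‖y_{2ν} - y_ν‖ ≤ 3 ν^{-1/4}`. Hence `y_{2^j}` converges
to some `y`, and `k^{1/8} y h^{1/8} = lim e_{2^j}(k) x e_{2^j}(h) = x`.
-/

open scoped NNReal
open NNReal Filter Topology

lemma NNReal.rpow_le_add_one_pow (s : ℝ≥0) {a : ℝ} {n : ℕ} (h0 : 0 ≤ a) (h : a ≤ n) :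
    s ^ a ≤ (s + 1) ^ n :=
  calc s ^ a ≤ (s + 1) ^ a := NNReal.rpow_le_rpow le_self_add h0
    _ ≤ (s + 1) ^ (n : ℝ) := NNReal.rpow_le_rpow_of_exponent_le le_add_self h
    _ = (s + 1) ^ n := NNReal.rpow_natCast _ n

namespace RootFactorization

noncomputable def unitFun (ν t : ℝ≥0) : ℝ≥0 := ν * t / (ν * t + 1)

noncomputable def cofactorFun (ν t : ℝ≥0) : ℝ≥0 := t ^ (7 / 8 : ℝ) * ν / (ν * t + 1)

noncomputable def cofactorStepFun (ν t : ℝ≥0) : ℝ≥0 :=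
  t ^ (7 / 8 : ℝ) * ν / ((2 * ν * t + 1) * (ν * t + 1))

@[fun_prop]
lemma continuous_unitFun (ν : ℝ≥0) : Continuous (unitFun ν) := by
  unfold unitFun
  fun_prop (disch := intro; positivity)

@[fun_prop]
lemma continuous_cofactorFun (ν : ℝ≥0) : Continuous (cofactorFun ν) := by
  unfold cofactorFun
  fun_prop (disch := first | norm_num | (intro; positivity))

@[fun_prop]
lemma continuous_cofactorStepFun (ν : ℝ≥0) : Continuous (cofactorStepFun ν) := by
  unfold cofactorStepFun
  fun_prop (disch := first | norm_num | (intro; positivity))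

@[simp] lemma unitFun_zero (ν : ℝ≥0) : unitFun ν 0 = 0 := by simp [unitFun]

@[simp] lemma cofactorFun_zero (ν : ℝ≥0) : cofactorFun ν 0 = 0 := by simp [cofactorFun]

@[simp] lemma cofactorStepFun_zero (ν : ℝ≥0) : cofactorStepFun ν 0 = 0 := by
  simp [cofactorStepFun]

lemma unitFun_le_one (ν t : ℝ≥0) : unitFun ν t ≤ 1 :=
  div_le_one_of_le₀ le_self_add (by positivity)

lemma one_sub_unitFun (ν t : ℝ≥0) : 1 - unitFun ν t = (ν * t + 1)⁻¹ := by
  rw [tsub_eq_iff_eq_add_of_le (unitFun_le_one ν t), unitFun, inv_eq_one_div, ← add_div,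
    add_comm 1, div_self (by positivity)]

lemma sqrt_mul_one_sub_unitFun_le {ν : ℝ≥0} (hν : ν ≠ 0) (t : ℝ≥0) :
    sqrt t * (1 - unitFun ν t) ≤ (sqrt ν)⁻¹ := by
  rw [one_sub_unitFun, ← div_eq_mul_inv, div_le_iff₀ (by positivity), ← div_eq_inv_mul,
    le_div_iff₀ (NNReal.sqrt_pos.2 (pos_iff_ne_zero.2 hν)), ← NNReal.sqrt_mul, mul_comm t,
    NNReal.sqrt_eq_rpow, ← pow_one (ν * t + 1)]
  exact rpow_le_add_one_pow _ (by norm_num) (by norm_num)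

lemma rpow_mul_cofactorFun (ν t : ℝ≥0) :
    t ^ ((8⁻¹ : ℝ≥0) : ℝ) * cofactorFun ν t = unitFun ν t := by
  rw [cofactorFun, unitFun, ← mul_div_assoc, ← mul_assoc, ← NNReal.rpow_add' (by norm_num)]
  norm_num [mul_comm]

lemma cofactorFun_le (ν t : ℝ≥0) : cofactorFun ν t ≤ ν ^ (8⁻¹ : ℝ) := by
  rw [cofactorFun, div_le_iff₀ (by positivity)]
  calc t ^ (7 / 8 : ℝ) * ν = ν ^ (8⁻¹ : ℝ) * (ν * t) ^ (7 / 8 : ℝ) := by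
        rw [NNReal.mul_rpow, ← mul_assoc, ← NNReal.rpow_add' (by norm_num)]
        norm_num [mul_comm]
    _ ≤ ν ^ (8⁻¹ : ℝ) * (ν * t + 1) ^ 1 := by
        gcongr
        exact rpow_le_add_one_pow _ (by norm_num) (by norm_num)
    _ = ν ^ (8⁻¹ : ℝ) * (ν * t + 1) := by rw [pow_one]

lemma cofactorFun_add_cofactorStepFun (ν t : ℝ≥0) :
    cofactorFun ν t + cofactorStepFun ν t = cofactorFun (2 * ν) t := by
  rw [cofactorFun, cofactorStepFun, cofactorFun, div_add_div _ _ (by positivity) (by positivity),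
    div_eq_div_iff (by positivity) (by positivity)]
  ring

lemma sqrt_mul_cofactorStepFun_le (ν t : ℝ≥0) :
    sqrt t * cofactorStepFun ν t ≤ ν ^ (-(3 / 8) : ℝ) := by
  rcases eq_or_ne ν 0 with rfl | hν
  · simp [cofactorStepFun]
  rw [NNReal.rpow_neg, NNReal.le_inv_iff_mul_le (by positivity)]
  have hpow : sqrt t * cofactorStepFun ν t * ν ^ (3 / 8 : ℝ)
      = (ν * t) ^ (11 / 8 : ℝ) / ((2 * ν * t + 1) * (ν * t + 1)) := by
    have hν : ν ^ (11 / 8 : ℝ) = ν * ν ^ (3 / 8 : ℝ) := by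
      rw [show (11 / 8 : ℝ) = 1 + 3 / 8 by norm_num, NNReal.rpow_add' (by norm_num),
        NNReal.rpow_one]
    have ht : t ^ (11 / 8 : ℝ) = t ^ (1 / 2 : ℝ) * t ^ (7 / 8 : ℝ) := by
      rw [← NNReal.rpow_add' (by norm_num)]; norm_num
    rw [cofactorStepFun, NNReal.sqrt_eq_rpow, NNReal.mul_rpow, hν, ht]
    ring
  rw [hpow, div_le_one (by positivity)]
  calc (ν * t) ^ (11 / 8 : ℝ) ≤ (ν * t + 1) ^ 2 := rpow_le_add_one_pow _ (by norm_num) (by norm_num)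
    _ ≤ (2 * ν * t + 1) * (ν * t + 1) := by
        rw [sq]; gcongr; exact le_mul_of_one_le_left (by positivity) one_le_two

end RootFactorization

section CStarAlgebra

variable {A : Type*} [NonUnitalCStarAlgebra A] [PartialOrder A] [StarOrderedRing A]

lemma nnnorm_mul_sq_le_of_mul_star_le {x k : A} (a : A) (hxk : x * star x ≤ k) :
    ‖a * x‖₊ ^ 2 ≤ ‖a * k * star a‖₊ := by
  rw [sq, ← CStarRing.nnnorm_self_mul_star, star_mul, ← mul_assoc, mul_assoc a]
  exact CStarAlgebra.nnnorm_le_nnnorm_of_nonneg_of_le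
    (star_right_conjugate_nonneg (mul_star_self_nonneg x) a)
    (star_right_conjugate_le_conjugate hxk a)

lemma nnnorm_cfcₙ_mul_le {x k : A} (hk : 0 ≤ k) (hxk : x * star x ≤ k) (f : ℝ≥0 → ℝ≥0)
    {C : ℝ≥0} (hC : ∀ t ∈ quasispectrum ℝ≥0 k, sqrt t * f t ≤ C)
    (hf : ContinuousOn f (quasispectrum ℝ≥0 k) := by cfc_cont_tac)
    (hf0 : f 0 = 0 := by cfc_zero_tac) :
    ‖cfcₙ f k * x‖₊ ≤ C := by
  have hconj : cfcₙ f k * k * star (cfcₙ f k) = cfcₙ (fun t ↦ (sqrt t * f t) ^ 2) k := by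
    calc cfcₙ f k * k * star (cfcₙ f k) = cfcₙ (fun t ↦ f t * t * f t) k := by
          rw [cfcₙ_mul _ f k, cfcₙ_mul f (fun t ↦ t) k, cfcₙ_id' ℝ≥0 k,
            (cfcₙ_predicate f k).star_eq]
      _ = cfcₙ (fun t ↦ (sqrt t * f t) ^ 2) k :=
          cfcₙ_congr fun t _ ↦ by rw [mul_pow, NNReal.sq_sqrt]; ring
  refine (pow_le_pow_iff_left₀ zero_le zero_le two_ne_zero).1 ?_
  calc ‖cfcₙ f k * x‖₊ ^ 2 ≤ ‖cfcₙ f k * k * star (cfcₙ f k)‖₊ :=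
        nnnorm_mul_sq_le_of_mul_star_le _ hxk
    _ ≤ C ^ 2 := by
        rw [hconj]
        exact nnnorm_cfcₙ_nnreal_le fun t ht ↦ pow_le_pow_left₀ zero_le (hC t ht) 2

lemma nnnorm_mul_cfcₙ_le {x h : A} (hh : 0 ≤ h) (hxh : star x * x ≤ h) (f : ℝ≥0 → ℝ≥0)
    {C : ℝ≥0} (hC : ∀ t ∈ quasispectrum ℝ≥0 h, sqrt t * f t ≤ C)
    (hf : ContinuousOn f (quasispectrum ℝ≥0 h) := by cfc_cont_tac)
    (hf0 : f 0 = 0 := by cfc_zero_tac) :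
    ‖x * cfcₙ f h‖₊ ≤ C := by
  rw [← nnnorm_star, star_mul, (cfcₙ_predicate f h).star_eq]
  exact nnnorm_cfcₙ_mul_le hh (by rwa [star_star]) f hC hf hf0

/-- In the unitization this is `(1 - e) a (1 - e) ≤ (1 - e) b (1 - e)`. -/
lemma one_sub_conjugate_le_one_sub_conjugate {a b e : A} (hab : a ≤ b) (he : IsSelfAdjoint e) :
    a - e * a - a * e + e * a * e ≤ b - e * b - b * e + e * b * e := by
  rw [← sub_nonneg] at hab ⊢
  obtain ⟨s, hs⟩ := CStarAlgebra.nonneg_iff_eq_star_mul_self.1 hab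
  calc (0 : A) ≤ star (s - s * e) * (s - s * e) := star_mul_self_nonneg _
    _ = (b - a) - e * (b - a) - (b - a) * e + e * (b - a) * e := by
        rw [hs, star_sub, star_mul, he.star_eq]; noncomm_ring
    _ = _ := by noncomm_ring

lemma nnnorm_sub_mul_sq_le_of_mul_star_le {x k e : A} (he : IsSelfAdjoint e)
    (hxk : x * star x ≤ k) :
    ‖x - e * x‖₊ ^ 2 ≤ ‖k - e * k - k * e + e * k * e‖₊ := by
  have hexp : (x - e * x) * star (x - e * x)
      = x * star x - e * (x * star x) - x * star x * e + e * (x * star x) * e := by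
    rw [star_sub, star_mul, he.star_eq]; noncomm_ring
  rw [sq, ← CStarRing.nnnorm_self_mul_star, hexp]
  exact CStarAlgebra.nnnorm_le_nnnorm_of_nonneg_of_le (hexp ▸ mul_star_self_nonneg _)
    (one_sub_conjugate_le_one_sub_conjugate hxk he)

lemma nnnorm_sub_cfcₙ_mul_le {x k : A} (hk : 0 ≤ k) (hxk : x * star x ≤ k) (f : ℝ≥0 → ℝ≥0)
    (hf1 : ∀ t ∈ quasispectrum ℝ≥0 k, f t ≤ 1)
    {C : ℝ≥0} (hC : ∀ t ∈ quasispectrum ℝ≥0 k, sqrt t * (1 - f t) ≤ C)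
    (hf : ContinuousOn f (quasispectrum ℝ≥0 k) := by cfc_cont_tac)
    (hf0 : f 0 = 0 := by cfc_zero_tac) :
    ‖x - cfcₙ f k * x‖₊ ≤ C := by
  set e := cfcₙ f k
  set g : ℝ≥0 → ℝ≥0 := fun t ↦ (sqrt t * (1 - f t)) ^ 2
  have hg : ContinuousOn g (quasispectrum ℝ≥0 k) := by fun_prop
  -- `g = t - 2 t f + t f²`, written additively because subtraction in `ℝ≥0` truncates
  have hsum : cfcₙ g k + (e * k + k * e) = k + e * k * e :=
    calc cfcₙ g k + (e * k + k * e) = cfcₙ (fun t ↦ g t + (f t * t + t * f t)) k := by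
          rw [cfcₙ_add g _ k hg (by simp [g]), cfcₙ_add (fun t ↦ f t * t) (fun t ↦ t * f t) k,
            cfcₙ_mul f (fun t ↦ t) k, cfcₙ_mul (fun t ↦ t) f k, cfcₙ_id' ℝ≥0 k]
      _ = cfcₙ (fun t ↦ t + f t * t * f t) k := cfcₙ_congr fun t ht ↦ by
          simp only [g]
          rw [mul_pow, NNReal.sq_sqrt, ← NNReal.coe_inj]
          push_cast [NNReal.coe_sub (hf1 t ht)]
          ring
      _ = k + e * k * e := by
          rw [cfcₙ_add (fun t ↦ t) (fun t ↦ f t * t * f t) k, cfcₙ_mul _ f k,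
            cfcₙ_mul f (fun t ↦ t) k, cfcₙ_id' ℝ≥0 k]
  refine (pow_le_pow_iff_left₀ zero_le zero_le two_ne_zero).1 ?_
  calc ‖x - e * x‖₊ ^ 2 ≤ ‖k - e * k - k * e + e * k * e‖₊ :=
        nnnorm_sub_mul_sq_le_of_mul_star_le (cfcₙ_predicate f k).isSelfAdjoint hxk
    _ = ‖cfcₙ g k‖₊ := by rw [eq_sub_of_add_eq hsum]; congr 1; abel
    _ ≤ C ^ 2 := nnnorm_cfcₙ_nnreal_le fun t ht ↦ pow_le_pow_left₀ zero_le (hC t ht) 2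

lemma nnnorm_sub_mul_cfcₙ_le {x h : A} (hh : 0 ≤ h) (hxh : star x * x ≤ h) (f : ℝ≥0 → ℝ≥0)
    (hf1 : ∀ t ∈ quasispectrum ℝ≥0 h, f t ≤ 1)
    {C : ℝ≥0} (hC : ∀ t ∈ quasispectrum ℝ≥0 h, sqrt t * (1 - f t) ≤ C)
    (hf : ContinuousOn f (quasispectrum ℝ≥0 h) := by cfc_cont_tac)
    (hf0 : f 0 = 0 := by cfc_zero_tac) :
    ‖x - x * cfcₙ f h‖₊ ≤ C := by
  rw [← nnnorm_star, star_sub, star_mul, (cfcₙ_predicate f h).star_eq]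
  exact nnnorm_sub_cfcₙ_mul_le hh (by rwa [star_star]) f hf1 hC hf hf0

end CStarAlgebra

namespace RootFactorization

variable {A : Type*} [NonUnitalCStarAlgebra A] [PartialOrder A] [StarOrderedRing A]
  {x h k : A}

noncomputable def cofactor (k x h : A) (ν : ℝ≥0) : A :=
  cfcₙ (cofactorFun ν) k * x * cfcₙ (cofactorFun ν) h

lemma nnrpow_mul_cofactor_mul_nnrpow (ν : ℝ≥0) :
    k ^ (8⁻¹ : ℝ≥0) * cofactor k x h ν * h ^ (8⁻¹ : ℝ≥0)
      = cfcₙ (unitFun ν) k * x * cfcₙ (unitFun ν) h := by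
  have hk' : k ^ (8⁻¹ : ℝ≥0) * cfcₙ (cofactorFun ν) k = cfcₙ (unitFun ν) k := by
    rw [CFC.nnrpow_def, ← cfcₙ_mul _ _ k]
    exact cfcₙ_congr fun t _ ↦ rpow_mul_cofactorFun ν t
  have hh' : cfcₙ (cofactorFun ν) h * h ^ (8⁻¹ : ℝ≥0) = cfcₙ (unitFun ν) h := by
    rw [CFC.nnrpow_def, ← cfcₙ_mul _ _ h]
    exact cfcₙ_congr fun t _ ↦ (mul_comm _ _).trans (rpow_mul_cofactorFun ν t)
  rw [← hk', ← hh', cofactor]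
  simp only [mul_assoc]

lemma cfcₙ_cofactorFun_two_mul (a : A) (ν : ℝ≥0) :
    cfcₙ (cofactorFun (2 * ν)) a = cfcₙ (cofactorFun ν) a + cfcₙ (cofactorStepFun ν) a := by
  rw [← funext (cofactorFun_add_cofactorStepFun ν), cfcₙ_add _ _ a]

lemma cofactor_two_mul_sub_cofactor (ν : ℝ≥0) :
    cofactor k x h (2 * ν) - cofactor k x h ν
      = cfcₙ (cofactorStepFun ν) k * x * cfcₙ (cofactorFun (2 * ν)) h
        + cfcₙ (cofactorFun ν) k * (x * cfcₙ (cofactorStepFun ν) h) := by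
  rw [cofactor, cofactor, cfcₙ_cofactorFun_two_mul k, cfcₙ_cofactorFun_two_mul h]
  noncomm_ring

lemma nnnorm_cofactor_two_mul_sub_le (hk : 0 ≤ k) (hh : 0 ≤ h) (hxk : x * star x ≤ k)
    (hxh : star x * x ≤ h) {ν : ℝ≥0} (hν : ν ≠ 0) :
    ‖cofactor k x h (2 * ν) - cofactor k x h ν‖₊ ≤ 3 * ν ^ (-(4⁻¹ : ℝ)) := by
  have hstep_k : ‖cfcₙ (cofactorStepFun ν) k * x‖₊ ≤ ν ^ (-(3 / 8) : ℝ) :=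
    nnnorm_cfcₙ_mul_le hk hxk _ fun t _ ↦ sqrt_mul_cofactorStepFun_le ν t
  have hstep_h : ‖x * cfcₙ (cofactorStepFun ν) h‖₊ ≤ ν ^ (-(3 / 8) : ℝ) :=
    nnnorm_mul_cfcₙ_le hh hxh _ fun t _ ↦ sqrt_mul_cofactorStepFun_le ν t
  have hfactor_k : ‖cfcₙ (cofactorFun ν) k‖₊ ≤ ν ^ (8⁻¹ : ℝ) :=
    nnnorm_cfcₙ_nnreal_le fun t _ ↦ cofactorFun_le ν t
  have hfactor_h : ‖cfcₙ (cofactorFun (2 * ν)) h‖₊ ≤ 2 * ν ^ (8⁻¹ : ℝ) := by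
    refine nnnorm_cfcₙ_nnreal_le fun t _ ↦ (cofactorFun_le _ t).trans ?_
    rw [NNReal.mul_rpow]
    gcongr
    exact (NNReal.rpow_le_rpow_of_exponent_le one_le_two (by norm_num)).trans_eq (NNReal.rpow_one 2)
  have hexp : ν ^ (8⁻¹ : ℝ) * ν ^ (-(3 / 8) : ℝ) = ν ^ (-(4⁻¹ : ℝ)) := by
    rw [← NNReal.rpow_add hν]; norm_num
  calc ‖cofactor k x h (2 * ν) - cofactor k x h ν‖₊
      ≤ ‖cfcₙ (cofactorStepFun ν) k * x‖₊ * ‖cfcₙ (cofactorFun (2 * ν)) h‖₊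
        + ‖cfcₙ (cofactorFun ν) k‖₊ * ‖x * cfcₙ (cofactorStepFun ν) h‖₊ := by
        rw [cofactor_two_mul_sub_cofactor]
        exact (nnnorm_add_le _ _).trans (add_le_add (nnnorm_mul_le _ _) (nnnorm_mul_le _ _))
    _ ≤ ν ^ (-(3 / 8) : ℝ) * (2 * ν ^ (8⁻¹ : ℝ)) + ν ^ (8⁻¹ : ℝ) * ν ^ (-(3 / 8) : ℝ) := by
        gcongr
    _ = 3 * ν ^ (-(4⁻¹ : ℝ)) := by rw [← hexp]; ring

lemma cauchySeq_cofactor_two_pow (hk : 0 ≤ k) (hh : 0 ≤ h) (hxk : x * star x ≤ k)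
    (hxh : star x * x ≤ h) :
    CauchySeq fun j : ℕ ↦ cofactor k x h (2 ^ j) := by
  refine cauchySeq_of_le_geometric ((2 : ℝ) ^ (-(4⁻¹ : ℝ))) 3
    (Real.rpow_lt_one_of_one_lt_of_neg one_lt_two (by norm_num)) fun j ↦ ?_
  have hj := nnnorm_cofactor_two_mul_sub_le hk hh hxk hxh (pow_ne_zero j (two_ne_zero' ℝ≥0))
  rw [dist_comm, dist_eq_norm, ← coe_nnnorm, pow_succ', Real.rpow_pow_comm zero_le_two]
  exact_mod_cast hj

lemma nnnorm_sub_cfcₙ_unitFun_mul_mul_le (hk : 0 ≤ k) (hh : 0 ≤ h) (hxk : x * star x ≤ k)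
    (hxh : star x * x ≤ h) {ν : ℝ≥0} (hν : ν ≠ 0) :
    ‖x - cfcₙ (unitFun ν) k * x * cfcₙ (unitFun ν) h‖₊ ≤ 2 * (sqrt ν)⁻¹ := by
  have hunit : ‖cfcₙ (unitFun ν) k‖₊ ≤ 1 := nnnorm_cfcₙ_nnreal_le fun t _ ↦ unitFun_le_one ν t
  have hleft : ‖x - cfcₙ (unitFun ν) k * x‖₊ ≤ (sqrt ν)⁻¹ :=
    nnnorm_sub_cfcₙ_mul_le hk hxk _ (fun t _ ↦ unitFun_le_one ν t)
      fun t _ ↦ sqrt_mul_one_sub_unitFun_le hν t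
  have hright : ‖x - x * cfcₙ (unitFun ν) h‖₊ ≤ (sqrt ν)⁻¹ :=
    nnnorm_sub_mul_cfcₙ_le hh hxh _ (fun t _ ↦ unitFun_le_one ν t)
      fun t _ ↦ sqrt_mul_one_sub_unitFun_le hν t
  calc ‖x - cfcₙ (unitFun ν) k * x * cfcₙ (unitFun ν) h‖₊
      = ‖(x - cfcₙ (unitFun ν) k * x) + cfcₙ (unitFun ν) k * (x - x * cfcₙ (unitFun ν) h)‖₊ := by
        noncomm_ring
    _ ≤ (sqrt ν)⁻¹ + 1 * (sqrt ν)⁻¹ :=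
        (nnnorm_add_le _ _).trans
          (add_le_add hleft ((nnnorm_mul_le _ _).trans (mul_le_mul' hunit hright)))
    _ = 2 * (sqrt ν)⁻¹ := by ring

lemma tendsto_cfcₙ_unitFun_mul_mul (hk : 0 ≤ k) (hh : 0 ≤ h) (hxk : x * star x ≤ k)
    (hxh : star x * x ≤ h) :
    Tendsto (fun ν ↦ cfcₙ (unitFun ν) k * x * cfcₙ (unitFun ν) h) atTop (𝓝 x) := by
  rw [← tendsto_sub_nhds_zero_iff]
  have hlim : Tendsto (fun ν : ℝ≥0 ↦ 2 * (√(ν : ℝ))⁻¹) atTop (𝓝 0) := by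
    simpa using ((tendsto_inv_atTop_zero.comp
      (Real.tendsto_sqrt_atTop.comp (NNReal.tendsto_coe_atTop.2 tendsto_id))).const_mul 2)
  refine squeeze_zero_norm' ?_ hlim
  filter_upwards [eventually_gt_atTop 0] with ν hν
  rw [norm_sub_rev, ← coe_nnnorm]
  simpa using NNReal.coe_le_coe.2 (nnnorm_sub_cfcₙ_unitFun_mul_mul_le hk hh hxk hxh hν.ne')

end RootFactorization

open RootFactorization in
theorem exists_eq_nnrpow_mul_mul_nnrpow {A : Type*} [NonUnitalCStarAlgebra A] [PartialOrder A]
    [StarOrderedRing A] {x h k : A}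
    (hk : 0 ≤ k) (hh : 0 ≤ h) (hxk : x * star x ≤ k) (hxh : star x * x ≤ h) :
    ∃ y : A, x = k ^ (8⁻¹ : ℝ≥0) * y * h ^ (8⁻¹ : ℝ≥0) := by
  obtain ⟨y, hy⟩ := cauchySeq_tendsto_of_complete (cauchySeq_cofactor_two_pow hk hh hxk hxh)
  refine ⟨y, tendsto_nhds_unique ?_ ((hy.const_mul _).mul_const _)⟩
  simp_rw [nnrpow_mul_cofactor_mul_nnrpow]
  exact (tendsto_cfcₙ_unitFun_mul_mul hk hh hxk hxh).comp
    (tendsto_pow_atTop_atTop_of_one_lt one_lt_two)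

theorem stmt14_general {A : Type*} [NonUnitalCStarAlgebra A] [PartialOrder A] [StarOrderedRing A]
    (x h k : A) (hh : 0 ≤ h) (hk : 0 ≤ k)
    (hx1 : star x * x ≤ h - h * h) (hx2 : x * star x ≤ k - k * k) :
    ∃ y : A, x = CFC.nnrpow k (8⁻¹ : ℝ≥0) * y * CFC.nnrpow h (8⁻¹ : ℝ≥0) :=
  exists_eq_nnrpow_mul_mul_nnrpow hk hh
    (hx2.trans (sub_le_self k hk.isSelfAdjoint.mul_self_nonneg))
    (hx1.trans (sub_le_self h hh.isSelfAdjoint.mul_self_nonneg))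

/-- If `h` and `k` are positive contractions in a C*-algebra `A` and
`x ∈ A` satisfies `x*x ≤ h - h²` and `xx* ≤ k - k²`, then `x` factors as
`x = k^{1/8} y h^{1/8}` for some `y ∈ A`. -/
theorem stmt14 {A : Type*} [NonUnitalCStarAlgebra A] [PartialOrder A] [StarOrderedRing A]
    (x h k : A) (hh : 0 ≤ h) (hh1 : ‖h‖ ≤ 1) (hk : 0 ≤ k) (hk1 : ‖k‖ ≤ 1)
    (hx1 : star x * x ≤ h - h * h) (hx2 : x * star x ≤ k - k * k) :
    ∃ y : A, x = CFC.nnrpow k (8⁻¹ : ℝ≥0) * y * CFC.nnrpow h (8⁻¹ : ℝ≥0) :=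
  stmt14_general x h k hh hk hx1 hx2
end
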